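/- Let F be a field and let R be a unipotent regular subgroup of the affine group AGL_2(F). Then R contains a translation different from the identity, i.e., R ∩ Tr ≠ {I_3}. -/

import Mathlib

/-! Every element of `R` has the form `(1 v; 0 I + N)` with `N² = 0`, and when the product of two
such elements is again unipotent, `tr (N N') = 0`. On traceless `2 × 2` matrices `-det` is the
quadratic form `a² + bc` and the trace form is its polar form, so two nilpotent matrices `N, N'`
with `tr (N N') = 0` span a totally singular subspace, hence are proportional. Hence, once some element has
`N₀ ≠ 0`, all linear parts lie in the commutative group `I + F N₀` and commutators in `R` are
translations. Choose `u` with `u N₀ ≠ 0` and let `X, Y ∈ R` have translation vectors `u N₀` and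
`u`. Either `X` is itself a translation, nontrivial since `u N₀ ≠ 0`, or its linear part is
`I + l N₀` with `l ≠ 0`, and the commutator of `X` and `Y` is the translation by `-l u N₀`. -/

open Matrix

/-- `M` lies in the affine group `AGL_n(F) ≤ GL_{n+1}(F)`:
it has block form `(1 v; 0 A)`, i.e. entry `(0,0)` equals `1` and the rest of
the first column is `0`. -/
def IsAffine {F : Type*} [Field F] {n : ℕ} (M : GL (Fin (n + 1)) F) : Prop :=
  (M : Matrix (Fin (n + 1)) (Fin (n + 1)) F) 0 0 = 1 ∧
    ∀ i : Fin (n + 1), i ≠ 0 → (M : Matrix (Fin (n + 1)) (Fin (n + 1)) F) i 0 = 0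

/-- `M` is a translation: it is affine with linear part `A = I_n`,
i.e. all rows other than the first agree with the identity matrix. -/
def IsTranslation {F : Type*} [Field F] {n : ℕ} (M : GL (Fin (n + 1)) F) : Prop :=
  IsAffine M ∧ ∀ i j : Fin (n + 1), i ≠ 0 →
    (M : Matrix (Fin (n + 1)) (Fin (n + 1)) F) i j = if i = j then 1 else 0

/-- `R` is a regular subgroup of `AGL_n(F)`: all its elements are affine and for
every `v ∈ F^n` there is exactly one element of `R` with first row `(1, v)`. -/
def IsRegularAffine {F : Type*} [Field F] {n : ℕ} (R : Subgroup (GL (Fin (n + 1)) F)) : Prop :=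
  (∀ M ∈ R, IsAffine M) ∧
    ∀ v : Fin n → F, ∃! M : GL (Fin (n + 1)) F, M ∈ R ∧
      ∀ j : Fin n, (M : Matrix (Fin (n + 1)) (Fin (n + 1)) F) 0 j.succ = v j

/-- `M ∈ GL_{n+1}(F)` is unipotent: `(M - I)^{n+1} = 0`. -/
def IsUnipotent {F : Type*} [Field F] {n : ℕ} (M : GL (Fin (n + 1)) F) : Prop :=
  ((M : Matrix (Fin (n + 1)) (Fin (n + 1)) F) - 1) ^ (n + 1) = 0

section AffineParts

variable {α : Type*} {n : ℕ}

def linearPart (P : Matrix (Fin (n + 1)) (Fin (n + 1)) α) : Matrix (Fin n) (Fin n) α :=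
  P.submatrix Fin.succ Fin.succ

def translationPart (P : Matrix (Fin (n + 1)) (Fin (n + 1)) α) : Fin n → α :=
  fun j => P 0 j.succ

variable [Ring α] {P Q : Matrix (Fin (n + 1)) (Fin (n + 1)) α}

@[simp]
lemma linearPart_one : linearPart (1 : Matrix (Fin (n + 1)) (Fin (n + 1)) α) = 1 :=
  submatrix_one _ (Fin.succ_injective n)

lemma linearPart_sub : linearPart (P - Q) = linearPart P - linearPart Q :=
  congr_fun₂ (submatrix_sub P Q) Fin.succ Fin.succ

lemma linearPart_mul (hP : ∀ i : Fin n, P i.succ 0 = 0) :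
    linearPart (P * Q) = linearPart P * linearPart Q := by
  ext i j
  simp [linearPart, mul_apply, Fin.sum_univ_succ, hP]

lemma linearPart_pow (hP : ∀ i : Fin n, P i.succ 0 = 0) (k : ℕ) :
    linearPart (P ^ k) = linearPart P ^ k := by
  induction k with
  | zero => simp
  | succ k ih => rw [pow_succ', linearPart_mul hP, ih, pow_succ']

lemma translationPart_mul (hP : P 0 0 = 1) :
    translationPart (P * Q) = translationPart Q + translationPart P ᵥ* linearPart Q := by
  ext j
  simp [translationPart, linearPart, mul_apply, vecMul, dotProduct, Fin.sum_univ_succ, hP]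

end AffineParts

lemma commute_of_sub_one_eq_smul {α K : Type*} [Ring α] [CommSemiring K] [Module K α]
    [IsScalarTower K α α] [SMulCommClass K α α] {a b c : α} {k l : K}
    (ha : a - 1 = k • c) (hb : b - 1 = l • c) : Commute a b := by
  have h : Commute (a - 1) (b - 1) := ha ▸ hb ▸ ((Commute.refl c).smul_left k).smul_right l
  simpa using (h.add_left (Commute.one_left _)).add_right (Commute.one_right _)

lemma exists_vecMul_ne_zero_of_ne_zero {m n α : Type*} [Fintype m] [NonAssocSemiring α]
    {A : Matrix m n α} (hA : A ≠ 0) : ∃ v, v ᵥ* A ≠ 0 := by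
  by_contra! h
  exact hA (ext_iff_vecMul.mpr fun v => (h v).trans (vecMul_zero v).symm)

section AffineGroup

variable {F : Type*} [Field F] {n : ℕ} {M P Q X Y : GL (Fin (n + 1)) F}

lemma IsAffine.apply_succ_zero (hM : IsAffine M) (i : Fin n) :
    M.val i.succ 0 = 0 :=
  hM.2 _ i.succ_ne_zero

lemma IsAffine.mul (hP : IsAffine P) (hQ : IsAffine Q) : IsAffine (P * Q) := by
  refine ⟨?_, fun i hi => ?_⟩
  · simp [mul_apply, Fin.sum_univ_succ, hP.1, hQ.1, hQ.apply_succ_zero]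
  · simp [mul_apply, Fin.sum_univ_succ, hP.2 i hi, hQ.apply_succ_zero]

lemma IsAffine.inv (hM : IsAffine M) : IsAffine M⁻¹ := by
  have h (i : Fin (n + 1)) : M⁻¹.val i 0 = (1 : Matrix (Fin (n + 1)) (Fin (n + 1)) F) i 0 := by
    simpa [mul_apply, Fin.sum_univ_succ, hM.1, hM.apply_succ_zero] using congr_fun₂ M.inv_mul i 0
  exact ⟨by simp [h], fun i hi => by simp [h, one_apply, hi]⟩

lemma IsAffine.isTranslation (hM : IsAffine M) (h : linearPart M.val = 1) :
    IsTranslation M := by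
  refine ⟨hM, fun i j hi => ?_⟩
  obtain ⟨i, rfl⟩ := Fin.exists_succ_eq.mpr hi
  cases j using Fin.cases with
  | zero => simp [hM.apply_succ_zero]
  | succ j => simpa [linearPart, one_apply] using congr_fun₂ h i j

lemma ne_one_of_translationPart_ne_zero (h : translationPart M.val ≠ 0) : M ≠ 1 := by
  rintro rfl
  exact h (funext fun j => by simp [translationPart, one_apply, (Fin.succ_ne_zero j).symm])

lemma IsAffine.isNilpotent_linearPart_sub_one (hM : IsAffine M) (hU : IsUnipotent M) :
    IsNilpotent (linearPart M.val - 1) := by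
  have hcol (i : Fin n) : (M.val - 1) i.succ 0 = 0 := by
    simp [hM.apply_succ_zero, one_apply, i.succ_ne_zero]
  refine ⟨n + 1, ?_⟩
  rw [← linearPart_one, ← linearPart_sub, ← linearPart_pow hcol, hU]
  rfl

lemma IsAffine.linearPart_inv_mul (hP : IsAffine P)
    (h : linearPart P.val = linearPart Q.val) :
    linearPart (P⁻¹ * Q).val = 1 := by
  rw [Units.val_mul, linearPart_mul hP.inv.apply_succ_zero, ← h,
    ← linearPart_mul hP.inv.apply_succ_zero, Units.inv_mul, linearPart_one]

lemma IsAffine.translationPart_inv_mul (hP : IsAffine P)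
    (h : linearPart (P⁻¹ * Q).val = 1) :
    translationPart (P⁻¹ * Q).val =
      translationPart Q.val - translationPart P.val := by
  have hQ := translationPart_mul (Q := (P⁻¹ * Q).val) hP.1
  rw [h, vecMul_one, ← Units.val_mul, mul_inv_cancel_left] at hQ
  rw [hQ, add_sub_cancel_right]

lemma IsAffine.linearPart_mul_comm (hX : IsAffine X) (hY : IsAffine Y)
    (h : Commute (linearPart X.val) (linearPart Y.val)) :
    linearPart (Y * X).val = linearPart (X * Y).val := by
  rw [Units.val_mul, Units.val_mul, linearPart_mul hX.apply_succ_zero,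
    linearPart_mul hY.apply_succ_zero, h.eq]

lemma IsAffine.isTranslation_inv_mul_mul (hX : IsAffine X) (hY : IsAffine Y)
    (h : Commute (linearPart X.val) (linearPart Y.val)) :
    IsTranslation ((Y * X)⁻¹ * (X * Y)) :=
  ((hY.mul hX).inv.mul (hX.mul hY)).isTranslation
    ((hY.mul hX).linearPart_inv_mul (hX.linearPart_mul_comm hY h))

lemma IsAffine.translationPart_inv_mul_mul (hX : IsAffine X) (hY : IsAffine Y)
    (h : Commute (linearPart X.val) (linearPart Y.val)) :
    translationPart ((Y * X)⁻¹ * (X * Y)).val =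
      translationPart X.val ᵥ* (linearPart Y.val - 1) -
        translationPart Y.val ᵥ* (linearPart X.val - 1) := by
  rw [(hY.mul hX).translationPart_inv_mul
      ((hY.mul hX).linearPart_inv_mul (hX.linearPart_mul_comm hY h)),
    Units.val_mul, Units.val_mul, translationPart_mul hX.1, translationPart_mul hY.1,
    vecMul_sub, vecMul_sub, vecMul_one, vecMul_one]
  abel

lemma IsRegularAffine.exists_translationPart_eq {R : Subgroup (GL (Fin (n + 1)) F)}
    (hR : IsRegularAffine R) (v : Fin n → F) :
    ∃ M ∈ R, translationPart M.val = v :=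
  let ⟨M, ⟨hM, hv⟩, _⟩ := hR.2 v
  ⟨M, hM, funext hv⟩

end AffineGroup

section Nilpotent

variable {F : Type*} [Field F] {m : Type*} [Fintype m] [DecidableEq m]

lemma IsNilpotent.trace_eq_zero {N : Matrix m m F} (hN : IsNilpotent N) : trace N = 0 :=
  (isNilpotent_trace_of_isNilpotent hN).eq_zero

lemma IsNilpotent.det_eq_zero [Nonempty m] {N : Matrix m m F} (hN : IsNilpotent N) :
    det N = 0 := by
  obtain ⟨k, hk⟩ := hN
  exact (pow_eq_zero_iff'.mp (by rw [← det_pow, hk, det_zero])).1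

lemma mul_self_eq_zero_of_isNilpotent_fin_two {N : Matrix (Fin 2) (Fin 2) F}
    (hN : IsNilpotent N) : N * N = 0 := by
  have hcayley := aeval_self_charpoly N
  rw [charpoly_fin_two, hN.trace_eq_zero, hN.det_eq_zero] at hcayley
  simpa [sq] using hcayley

lemma exists_eq_smul_of_isNilpotent_of_trace_mul_eq_zero {N N' : Matrix (Fin 2) (Fin 2) F}
    (hN : IsNilpotent N) (hN' : IsNilpotent N') (h : trace (N * N') = 0) (hN'0 : N' ≠ 0) :
    ∃ l : F, N = l • N' := by
  have ht := hN.trace_eq_zero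
  have hd := hN.det_eq_zero
  have ht' := hN'.trace_eq_zero
  have hd' := hN'.det_eq_zero
  obtain ⟨a, b, c, d, rfl⟩ : ∃ a b c d, N = !![a, b; c, d] := ⟨_, _, _, _, eta_fin_two N⟩
  obtain ⟨a', b', c', d', rfl⟩ : ∃ a b c d, N' = !![a, b; c, d] := ⟨_, _, _, _, eta_fin_two N'⟩
  simp only [trace_fin_two_of, det_fin_two_of] at ht ht' hd hd'
  obtain rfl : d = -a := by linear_combination ht
  obtain rfl : d' = -a' := by linear_combination ht'
  simp only [mul_fin_two, trace_fin_two_of] at h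
  have hcross : ![a', b', c'] ⨯₃ ![a, b, c] = 0 := by
    have h₁ : (b' * c - c' * b) ^ 2 = 0 := by
      linear_combination (4 * b' * c') * hd - (4 * a ^ 2) * hd' +
        (b * c' + c * b' - 2 * a * a') * h
    have h₂ : (c' * a - a' * c) ^ 2 = 0 := by
      linear_combination -c' ^ 2 * hd - c ^ 2 * hd' - c * c' * h
    have h₃ : (a' * b - b' * a) ^ 2 = 0 := by
      linear_combination -b' ^ 2 * hd - b ^ 2 * hd' - b * b' * h
    rw [pow_eq_zero_iff two_ne_zero] at h₁ h₂ h₃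
    simp [cross_apply, h₁, h₂, h₃]
  have hv' : ![a', b', c'] ≠ 0 := by
    intro h0
    simp only [cons_eq_zero_iff] at h0
    obtain ⟨rfl, rfl, rfl, -⟩ := h0
    exact hN'0 (by ext i j; fin_cases i <;> fin_cases j <;> simp)
  obtain ⟨l, hl⟩ : ∃ l : F, l • ![a', b', c'] = ![a, b, c] := by
    by_contra! hind
    exact crossProduct_ne_zero_iff_linearIndependent.mpr
      ((LinearIndependent.pair_iff' hv').mpr hind) hcross
  simp only [smul_cons, smul_eq_mul, smul_empty, vecCons_inj] at hl
  obtain ⟨rfl, rfl, rfl, -⟩ := hl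
  refine ⟨l, ?_⟩
  ext i j
  fin_cases i <;> fin_cases j <;> simp

end Nilpotent

lemma IsAffine.exists_linearPart_sub_one_eq_smul {F : Type*} [Field F] {X Y : GL (Fin (2 + 1)) F}
    (hX : IsAffine X) (hY : IsAffine Y) (hXu : IsUnipotent X) (hYu : IsUnipotent Y)
    (hXYu : IsUnipotent (X * Y)) (hY1 : linearPart Y.val ≠ 1) :
    ∃ l : F, linearPart X.val - 1 = l • (linearPart Y.val - 1) := by
  have hN := hX.isNilpotent_linearPart_sub_one hXu
  have hN' := hY.isNilpotent_linearPart_sub_one hYu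
  have hNN' := (hX.mul hY).isNilpotent_linearPart_sub_one hXYu
  refine exists_eq_smul_of_isNilpotent_of_trace_mul_eq_zero hN hN' ?_ (sub_ne_zero.mpr hY1)
  have hsum : linearPart X.val * linearPart Y.val - 1 =
      (linearPart X.val - 1) + (linearPart Y.val - 1) +
        (linearPart X.val - 1) * (linearPart Y.val - 1) := by
    noncomm_ring
  have htr := hNN'.trace_eq_zero
  rwa [Units.val_mul, linearPart_mul hX.apply_succ_zero, hsum, trace_add, trace_add,
    hN.trace_eq_zero, hN'.trace_eq_zero, zero_add, zero_add] at htr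

lemma IsRegularAffine.exists_isTranslation_ne_one_of_linearPart_ne_one {F : Type*} [Field F]
    {R : Subgroup (GL (Fin (2 + 1)) F)} (hreg : IsRegularAffine R)
    (huni : ∀ M ∈ R, IsUnipotent M) {M₀ : GL (Fin (2 + 1)) F} (hM₀ : M₀ ∈ R)
    (hM₀1 : linearPart M₀.val ≠ 1) :
    ∃ M ∈ R, IsTranslation M ∧ M ≠ 1 := by
  have haff := hreg.1
  set N := linearPart M₀.val - 1
  have hNN : N * N = 0 := mul_self_eq_zero_of_isNilpotent_fin_two
    ((haff M₀ hM₀).isNilpotent_linearPart_sub_one (huni M₀ hM₀))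
  have hlinear {M} (hM : M ∈ R) : ∃ l : F, linearPart M.val - 1 = l • N :=
    (haff M hM).exists_linearPart_sub_one_eq_smul (haff M₀ hM₀) (huni M hM) (huni M₀ hM₀)
      (huni _ (R.mul_mem hM hM₀)) hM₀1
  obtain ⟨u, hu⟩ := exists_vecMul_ne_zero_of_ne_zero (sub_ne_zero.mpr hM₀1)
  obtain ⟨X, hX, hXu⟩ := hreg.exists_translationPart_eq (u ᵥ* N)
  obtain ⟨Y, hY, hYu⟩ := hreg.exists_translationPart_eq u
  obtain ⟨l, hl⟩ := hlinear hX
  obtain ⟨μ, hμ⟩ := hlinear hY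
  by_cases hl0 : l = 0
  · refine ⟨X, hX, (haff X hX).isTranslation ?_, ne_one_of_translationPart_ne_zero (hXu ▸ hu)⟩
    rwa [hl0, zero_smul, sub_eq_zero] at hl
  have hcomm := commute_of_sub_one_eq_smul hl hμ
  refine ⟨(Y * X)⁻¹ * (X * Y), R.mul_mem (R.inv_mem (R.mul_mem hY hX)) (R.mul_mem hX hY),
    (haff X hX).isTranslation_inv_mul_mul (haff Y hY) hcomm, ne_one_of_translationPart_ne_zero ?_⟩
  rw [(haff X hX).translationPart_inv_mul_mul (haff Y hY) hcomm, hl, hμ, hXu, hYu, vecMul_smul,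
    vecMul_smul, vecMul_vecMul, hNN, vecMul_zero, smul_zero, zero_sub, neg_ne_zero]
  exact smul_ne_zero hl0 hu

theorem unipotent_regular_AGL2_contains_translation {F : Type*} [Field F]
    (R : Subgroup (GL (Fin (2 + 1)) F))
    (hreg : IsRegularAffine R) (huni : ∀ M ∈ R, IsUnipotent M) :
    ∃ M ∈ R, IsTranslation M ∧ M ≠ 1 := by
  by_cases hlin : ∀ M ∈ R, linearPart M.val = 1
  · obtain ⟨M, hM, hv⟩ := hreg.exists_translationPart_eq (Pi.single 0 1)
    exact ⟨M, hM, (hreg.1 M hM).isTranslation (hlin M hM),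
      ne_one_of_translationPart_ne_zero (by simp [hv])⟩
  · push Not at hlin
    obtain ⟨M₀, hM₀, hM₀1⟩ := hlin
    exact hreg.exists_isTranslation_ne_one_of_linearPart_ne_one huni hM₀ hM₀1
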